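/- Let E be a real normed vector space, K a natural number, δ > 0, and ε > 0. Suppose f_1,…,f_K : E → E and g_1,…,g_K : E → E are maps such that each g_k is Lipschitz with constant γ_k ≥ 0, and for every k and every x ∈ E, ‖f_k(x) − g_k(x)‖ ≤ ε_k, where ε_k ≥ 0. If Σ_{k=1}^{K} ε_k · Π_{j=k+1}^{K} γ_j ≤ ε · δ, then the composite G = g_K ∘ ⋯ ∘ g_1 is an ε-approximate representation of F = f_K ∘ ⋯ ∘ f_1 with regularization constant δ; that is, for every x ∈ E with ‖x‖ ≤ 1, ‖F(x) − G(x)‖ ≤ ε · (‖F(x)‖ + δ). -/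
import Mathlib


/-- The composite `f_K ∘ ⋯ ∘ f_1` of a finite family of maps, applying `f 0` first.
For `K = 0` this is the identity. -/
def compFun {E : Type*} {K : ℕ} (f : Fin K → E → E) : E → E :=
  fun x => (List.ofFn f).foldl (fun v g => g v) x

lemma compFun_succ {E : Type*} {K : ℕ} (f : Fin (K + 1) → E → E) (x : E) :
    compFun f x = f (Fin.last K) (compFun (fun i => f i.castSucc) x) := by
  unfold compFun
  rw [List.ofFn_succ', List.concat_eq_append, List.foldl_append]
  simp

lemma prod_filter_castSucc {K : ℕ} (γ : Fin (K + 1) → ℝ) (i : Fin K) :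
    (∏ j ∈ Finset.univ.filter (fun j => Fin.castSucc i < j), γ j)
      = γ (Fin.last K) *
        ∏ j ∈ Finset.univ.filter (fun j => i < j), γ (Fin.castSucc j) := by
  rw [Finset.prod_filter, Finset.prod_filter, Fin.prod_univ_castSucc]
  simp [Fin.castSucc_lt_castSucc_iff, Fin.castSucc_lt_last, mul_comm]

lemma key {E : Type*} [NormedAddCommGroup E] :
    ∀ (K : ℕ) (f g : Fin K → E → E) (γ εk : Fin K → ℝ),
    (∀ k, 0 ≤ γ k) →
    (∀ k, ∀ x y : E, ‖g k x - g k y‖ ≤ γ k * ‖x - y‖) →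
    (∀ k, ∀ x : E, ‖f k x - g k x‖ ≤ εk k) →
    ∀ x : E, ‖compFun f x - compFun g x‖ ≤
      ∑ k : Fin K, εk k * ∏ j ∈ Finset.univ.filter (fun j => k < j), γ j := by
  intro K
  induction K with
  | zero => intro f g γ εk _ _ _ x; simp [compFun]
  | succ K ih =>
    intro f g γ εk hγ hLip happrox x
    rw [compFun_succ, compFun_succ]
    set Fx := compFun (fun i => f i.castSucc) x
    set Gx := compFun (fun i => g i.castSucc) x
    have h1 : ‖f (Fin.last K) Fx - g (Fin.last K) Gx‖ ≤
        ‖f (Fin.last K) Fx - g (Fin.last K) Fx‖ + ‖g (Fin.last K) Fx - g (Fin.last K) Gx‖ := by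
      have := norm_sub_le_norm_sub_add_norm_sub (f (Fin.last K) Fx) (g (Fin.last K) Fx)
        (g (Fin.last K) Gx)
      linarith [this]
    have h2 : ‖g (Fin.last K) Fx - g (Fin.last K) Gx‖ ≤ γ (Fin.last K) * ‖Fx - Gx‖ :=
      hLip _ _ _
    have h3 := ih (fun i => f i.castSucc) (fun i => g i.castSucc)
      (fun i => γ i.castSucc) (fun i => εk i.castSucc)
      (fun i => hγ _) (fun i => hLip _) (fun i => happrox _) x
    have h4 : ‖Fx - Gx‖ ≤
        ∑ k : Fin K, εk k.castSucc * ∏ j ∈ Finset.univ.filter (fun j => k < j),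
          γ j.castSucc := h3
    rw [Fin.sum_univ_castSucc]
    have hlastprod :
        (∏ j ∈ Finset.univ.filter (fun j => Fin.last K < j), γ j) = 1 := by
      rw [Finset.prod_eq_one]
      intro j hj
      simp only [Finset.mem_filter] at hj
      exact absurd hj.2 (not_lt.mpr (Fin.le_last j))
    have hsum : (∑ k : Fin K, εk k.castSucc *
          ∏ j ∈ Finset.univ.filter (fun j => k.castSucc < j), γ j)
        = γ (Fin.last K) * ∑ k : Fin K, εk k.castSucc *
            ∏ j ∈ Finset.univ.filter (fun j => k < j), γ j.castSucc := by
      rw [Finset.mul_sum]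
      apply Finset.sum_congr rfl
      intro k _
      rw [prod_filter_castSucc]
      ring
    rw [hsum, hlastprod]
    have h5 : γ (Fin.last K) * ‖Fx - Gx‖ ≤
        γ (Fin.last K) * ∑ k : Fin K, εk k.castSucc *
          ∏ j ∈ Finset.univ.filter (fun j => k < j), γ j.castSucc :=
      mul_le_mul_of_nonneg_left h4 (hγ _)
    have h6 := happrox (Fin.last K) Fx
    calc ‖f (Fin.last K) Fx - g (Fin.last K) Gx‖
        ≤ ‖f (Fin.last K) Fx - g (Fin.last K) Fx‖ +
            ‖g (Fin.last K) Fx - g (Fin.last K) Gx‖ := h1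
      _ ≤ εk (Fin.last K) + γ (Fin.last K) * ‖Fx - Gx‖ := by
          exact add_le_add h6 h2
      _ ≤ εk (Fin.last K) + γ (Fin.last K) * ∑ k : Fin K, εk k.castSucc *
            ∏ j ∈ Finset.univ.filter (fun j => k < j), γ j.castSucc := by linarith
      _ = (γ (Fin.last K) * ∑ k : Fin K, εk k.castSucc *
            ∏ j ∈ Finset.univ.filter (fun j => k < j), γ j.castSucc)
          + εk (Fin.last K) * 1 := by ring

/-- Nonlinear-stage case of the Finite Primitive Basis Theorem: a
stagewise-approximated composite forward model with Lipschitz nonlinear stages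
satisfies the relative ε-representation criterion with regularization constant δ. -/
theorem stmt3 {E : Type*} [NormedAddCommGroup E]
    (K : ℕ) (δ ε : ℝ) (hδ : 0 < δ) (hε : 0 < ε)
    (f g : Fin K → E → E) (γ εk : Fin K → ℝ)
    (hγ : ∀ k, 0 ≤ γ k) (hεk : ∀ k, 0 ≤ εk k)
    (hLip : ∀ k, ∀ x y : E, ‖g k x - g k y‖ ≤ γ k * ‖x - y‖)
    (happrox : ∀ k, ∀ x : E, ‖f k x - g k x‖ ≤ εk k)
    (hbound : (∑ k : Fin K, εk k * ∏ j ∈ Finset.univ.filter (fun j => k < j), γ j)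
      ≤ ε * δ) :
    ∀ x : E, ‖x‖ ≤ 1 →
      ‖compFun f x - compFun g x‖ ≤ ε * (‖compFun f x‖ + δ) := by
  intro x _
  have h := key K f g γ εk hγ hLip happrox x
  have hFnn : 0 ≤ ‖compFun f x‖ := norm_nonneg _
  nlinarith [h, hbound]
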